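/- Let q be a prime power, α a multiplicative generator of F_{q^n}^×, and I = {i_1,...,i_n} distinct integers. If the minimal polynomial of α does not divide ∑_{j=1}^n c_j x^{i_j} for any nonzero (c_1,...,c_n) ∈ F_q^n, then for any basis B of F_{q^n} over F_q and any nonzero v ∈ F_q^n, the sequence Λ(α, B, v) defined by Λ_j = v^T f_B(α^j) for 0 ≤ j ≤ q^n - 2 is an I*-cycle: every nonzero word W ∈ F_q^n appears as (Λ_{i_1+t}, ..., Λ_{i_n+t}) for some t ∈ Z_{q^n - 1} (indices mod q^n - 1). -/

import Mathlib

/-!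
Put `ℓ x := ∑ₖ vₖ (f_B x)ₖ`, a nonzero `K`-linear functional on `L`, so that `Λ_s = ℓ(α^s)`, and
the window of `Λ` at `t` is `ψ(α^t)` for `ψ x := (ℓ(α^{i_j} x))_j`. The hypothesis on the minimal
polynomial says exactly that the `α^{i_j}` are linearly independent over `K`. For `x ≠ 0` the
elements `α^{i_j} x` are then a basis of `L`, on which `ℓ` cannot vanish; so `ψ` is injective,
hence bijective, and every nonzero `W` is `ψ(x)` with `x ≠ 0`, i.e. `x = α^t`.
-/

open Polynomial

theorem linearIndependent_pow_of_not_minpoly_dvd {K L ι : Type*} [Field K] [Ring L] [Algebra K L]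
    [Fintype ι] (x : L) (e : ι → ℕ)
    (h : ∀ c : ι → K, c ≠ 0 → ¬ minpoly K x ∣ ∑ j, C (c j) * X ^ (e j)) :
    LinearIndependent K (fun j => x ^ e j) := by
  rw [Fintype.linearIndependent_iff]
  intro c hc
  by_contra hne
  refine h c (fun h0 => hne (congrFun h0)) (minpoly.dvd K x ?_)
  simpa [map_sum, Algebra.smul_def] using hc

theorem Module.Basis.sum_smul_coord_ne_zero {K V ι : Type*} [Field K] [AddCommGroup V]
    [Module K V] [Fintype ι] [DecidableEq ι] (B : Module.Basis ι K V) {v : ι → K} (hv : v ≠ 0) :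
    ∑ k, v k • B.coord k ≠ 0 := by
  obtain ⟨k₀, hk₀⟩ := Function.ne_iff.mp hv
  intro h
  exact hk₀ (by simpa [Finsupp.single_apply] using LinearMap.congr_fun h (B k₀))

section windowMap

variable {K L ι : Type*} [Field K] [Field L] [Algebra K L]

/-- With `b j = α ^ i j` this sends `α ^ t` to the window `(Λ_{i_j + t})_j`. -/
def windowMap (ℓ : L →ₗ[K] K) (b : ι → L) : L →ₗ[K] (ι → K) :=
  LinearMap.pi fun j => ℓ ∘ₗ LinearMap.mulLeft K (b j)

@[simp]
theorem windowMap_apply (ℓ : L →ₗ[K] K) (b : ι → L) (x : L) (j : ι) :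
    windowMap ℓ b x j = ℓ (b j * x) :=
  rfl

variable [Fintype ι] [FiniteDimensional K L] {ℓ : L →ₗ[K] K} {b : ι → L}

theorem windowMap_injective (hℓ : ℓ ≠ 0) (hb : LinearIndependent K b)
    (hcard : Fintype.card ι = Module.finrank K L) : Function.Injective (windowMap ℓ b) := by
  rw [← LinearMap.ker_eq_bot, Submodule.eq_bot_iff]
  intro x hx
  by_contra hx0
  have hbx : LinearIndependent K (fun j => b j * x) :=
    hb.map' (LinearMap.mulRight K x) (LinearMap.ker_eq_bot.2 (mul_left_injective₀ hx0))
  refine hℓ (LinearMap.ext_on_range (hbx.span_eq_top_of_card_eq_finrank' hcard) fun j => ?_)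
  exact congrFun (LinearMap.mem_ker.mp hx) j

theorem windowMap_bijective (hℓ : ℓ ≠ 0) (hb : LinearIndependent K b)
    (hcard : Fintype.card ι = Module.finrank K L) : Function.Bijective (windowMap ℓ b) := by
  have hinj := windowMap_injective hℓ hb hcard
  refine ⟨hinj, (LinearMap.injective_iff_surjective_of_finrank_eq_finrank ?_).mp hinj⟩
  rw [Module.finrank_fintype_fun_eq_card, hcard]

end windowMap

theorem pow_val_intCast_of_orderOf_dvd {G : Type*} [Group G] {N : ℕ} [NeZero N] {α : G}
    (h : orderOf α ∣ N) (z : ℤ) : α ^ (z : ZMod N).val = α ^ z := by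
  rw [← zpow_natCast, ZMod.val_intCast, zpow_eq_zpow_iff_modEq]
  exact (Int.mod_modEq z N).of_dvd (Int.natCast_dvd_natCast.mpr h)

theorem stmt_8_general (K L : Type*) [Field K] [Field L] [Algebra K L]
    [Fintype L]
    (n : ℕ) (B : Module.Basis (Fin n) K L)
    (α : Lˣ) (hα : ∀ u : Lˣ, u ∈ Subgroup.zpowers α)
    (v : Fin n → K) (hv : v ≠ 0)
    (i : Fin n → ℕ)
    (hmin : ∀ c : Fin n → K, c ≠ 0 →
      ¬ (minpoly K (α : L) ∣ ∑ j, Polynomial.C (c j) * Polynomial.X ^ (i j))) :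
    ∀ W : Fin n → K, W ≠ 0 → ∃ t : ZMod (Fintype.card L - 1),
      ∀ j : Fin n,
        (fun s : ZMod (Fintype.card L - 1) =>
          ∑ k, v k * B.repr ((α : L) ^ s.val) k) (((i j : ℕ) : ZMod (Fintype.card L - 1)) + t)
          = W j := by
  classical
  intro W hW
  have : FiniteDimensional K L := B.finiteDimensional_of_finite
  have : NeZero (Fintype.card L - 1) := ⟨by have := Fintype.one_lt_card (α := L); omega⟩
  obtain ⟨x, hx⟩ := (windowMap_bijective (B.sum_smul_coord_ne_zero hv)
    (linearIndependent_pow_of_not_minpoly_dvd _ i hmin)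
    (by rw [Module.finrank_eq_card_basis B])).2 W
  have hx0 : x ≠ 0 := by rintro rfl; exact hW (by simp [← hx])
  obtain ⟨z, hz⟩ := Subgroup.mem_zpowers_iff.mp (hα (Units.mk0 x hx0))
  have hord : orderOf α ∣ Fintype.card L - 1 := Fintype.card_units (α := L) ▸ orderOf_dvd_card
  refine ⟨z, fun j => ?_⟩
  have hpow : (α : L) ^ (((i j : ℕ) : ZMod (Fintype.card L - 1)) + (z : ZMod _)).val =
      (α : L) ^ i j * x := by
    rw [← Int.cast_natCast, ← Int.cast_add, ← Units.val_pow_eq_pow_val,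
      pow_val_intCast_of_orderOf_dvd hord, zpow_add, hz, zpow_natCast]
    rfl
  simpa [hpow, windowMap] using congrFun hx j

/-- With `L/K` finite fields of degree `n`, `α` a generator of `Lˣ`, `B` a basis,
`v ≠ 0`, and distinct exponents `i_1, …, i_n`: if the minimal polynomial of `α`
divides no nonzero combination `∑ c_j x^{i_j}`, then `Λ(α, B, v)`, defined on
`ZMod (card L - 1)` by `Λ_j = vᵀ f_B(α^j)`, is an `I*`-cycle: every nonzero word
`W ∈ Kⁿ` appears as `(Λ_{i_1+t}, …, Λ_{i_n+t})` for some `t`. -/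
theorem stmt_8 (K L : Type*) [Field K] [Field L] [Algebra K L]
    [Fintype K] [Fintype L]
    (n : ℕ) (hn : 1 ≤ n) (B : Module.Basis (Fin n) K L)
    (α : Lˣ) (hα : ∀ u : Lˣ, u ∈ Subgroup.zpowers α)
    (v : Fin n → K) (hv : v ≠ 0)
    (i : Fin n → ℕ) (hi : Function.Injective i)
    (hmin : ∀ c : Fin n → K, c ≠ 0 →
      ¬ (minpoly K (α : L) ∣ ∑ j, Polynomial.C (c j) * Polynomial.X ^ (i j))) :
    ∀ W : Fin n → K, W ≠ 0 → ∃ t : ZMod (Fintype.card L - 1),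
      ∀ j : Fin n,
        (fun s : ZMod (Fintype.card L - 1) =>
          ∑ k, v k * B.repr ((α : L) ^ s.val) k) (((i j : ℕ) : ZMod (Fintype.card L - 1)) + t)
          = W j :=
  stmt_8_general K L n B α hα v hv i hmin
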